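/- Assume the transshipment problem is feasible, and let p̂ be a potential on the vertices of Ĥ with (p̂_i − p̂_j)/ℓ_{ij} = 1 for every arc ij ∈ Ĥ. Let π be a directed path in G from node a to node b such that a and b both belong to V(Ĥ) and lie in the same connected component of Ĥ, every internal node of π lies outside V(Ĥ), and π has at least one arc not in Ĥ. Then the slope of π satisfies (p̂_a − p̂_b)/ℓ(π) < 1, where ℓ(π) = ∑_{e∈π} ℓ_e. -/

import Mathlib

open scoped BigOperators

section PhysarumSetup

variable {V E : Type*} [Fintype V] [Fintype E] [DecidableEq V] [DecidableEq E]

/-- Incidence (boundary) matrix of the digraph given by `tail`/`head`: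
`+1` if `i` is the tail of `e`, `-1` if `i` is the head of `e`, `0` otherwise. -/
def incMatrix (tail head : E → V) : Matrix V E ℝ :=
  Matrix.of fun i e => if tail e = i then (1 : ℝ) else if head e = i then -1 else 0

/-- The digraph has no loops. -/
def NoLoops (tail head : E → V) : Prop := ∀ e, tail e ≠ head e

/-- The digraph has no multiple arcs. -/
def NoMultiple (tail head : E → V) : Prop :=
  ∀ e f, tail e = tail f → head e = head f → e = f

/-- Adjacency in the underlying undirected graph. -/
def Adj (tail head : E → V) (i j : V) : Prop :=
  ∃ e, (tail e = i ∧ head e = j) ∨ (tail e = j ∧ head e = i)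

/-- The underlying undirected graph is connected. -/
def IsConnectedGraph (tail head : E → V) : Prop :=
  ∀ i j : V, Relation.ReflTransGen (Adj tail head) i j

/-- `φ` is a flow with source vector `b`: `Bφ = b`. -/
def IsFlow (tail head : E → V) (b : V → ℝ) (φ : E → ℝ) : Prop :=
  (incMatrix tail head).mulVec φ = b

/-- Net supply `b(S)` of a vertex set `S`. -/
def netSupply (b : V → ℝ) (S : Finset V) : ℝ := ∑ i ∈ S, b i

/-- `b*_max = max_{S ⊆ V} |b(S)|`. -/
noncomputable def bstarMax (b : V → ℝ) : ℝ :=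
  sSup {x | ∃ S : Finset V, x = |netSupply b S|}

/-- `b*_min = min { |b(S)| : S ⊆ V, b(S) ≠ 0 }`. -/
noncomputable def bstarMin (b : V → ℝ) : ℝ :=
  sInf {x | ∃ S : Finset V, netSupply b S ≠ 0 ∧ x = |netSupply b S|}

/-- The support of an arc vector. -/
def suppE (φ : E → ℝ) : Set E := {e | φ e ≠ 0}

/-- An arc set is a forest in the underlying undirected graph:
equivalently, it supports no nonzero circulation. -/
def ForestSupport (tail head : E → V) (s : Set E) : Prop :=
  ∀ γ : E → ℝ, (incMatrix tail head).mulVec γ = 0 → (∀ e, γ e ≠ 0 → e ∈ s) → γ = 0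

/-- A basic feasible solution: a positive flow whose support is a forest
in the underlying undirected graph. -/
def IsBFS (tail head : E → V) (b : V → ℝ) (f : E → ℝ) : Prop :=
  IsFlow tail head b f ∧ (∀ e, 0 ≤ f e) ∧ ForestSupport tail head (suppE f)

/-- A vector is circulation free if its support contains no directed cycle:
equivalently, it supports no nonzero nonnegative circulation. -/
def CirculationFree (tail head : E → V) (φ : E → ℝ) : Prop :=
  ∀ γ : E → ℝ, (incMatrix tail head).mulVec γ = 0 → (∀ e, 0 ≤ γ e) →
    (∀ e, γ e ≠ 0 → φ e ≠ 0) → γ = 0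

/-- The weighted graph Laplacian `L(σ) = B · diag(σ/ℓ) · Bᵀ`. -/
noncomputable def lap (tail head : E → V) (ℓ σ : E → ℝ) : Matrix V V ℝ :=
  incMatrix tail head * Matrix.diagonal (fun e => σ e / ℓ e) * (incMatrix tail head).transpose

/-- The field (slope) of a potential: `Ψ(p)_{ij} = (p_i - p_j)/ℓ_{ij}`. -/
noncomputable def field (tail head : E → V) (ℓ : E → ℝ) (p : V → ℝ) : E → ℝ :=
  fun e => (p (tail e) - p (head e)) / ℓ e

/-- The set of vertices incident to an arc set `H`. -/
def VSet (tail head : E → V) (H : Set E) : Set V :=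
  {i | ∃ e ∈ H, tail e = i ∨ head e = i}

/-- Undirected reachability using only arcs in `H`. -/
def UReach (tail head : E → V) (H : Set E) : V → V → Prop :=
  Relation.ReflTransGen
    (fun i j => ∃ e ∈ H, (tail e = i ∧ head e = j) ∨ (tail e = j ∧ head e = i))

/-- `WalkLen tail head ℓ H i j L`: there is a walk in the underlying undirected
graph of `H` from `i` to `j` of total `ℓ`-length `L`. -/
inductive WalkLen (tail head : E → V) (ℓ : E → ℝ) (H : Set E) : V → V → ℝ → Prop
  | refl (i : V) : WalkLen tail head ℓ H i i 0
  | step {j k : V} {L : ℝ} (i : V) (e : E) (he : e ∈ H)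
      (hik : (tail e = i ∧ head e = j) ∨ (tail e = j ∧ head e = i))
      (hw : WalkLen tail head ℓ H j k L) : WalkLen tail head ℓ H i k (ℓ e + L)

/-- The minimal `ℓ`-length of a connecting walk within `H`. -/
noncomputable def wdist (tail head : E → V) (ℓ : E → ℝ) (H : Set E) (i j : V) : ℝ :=
  sInf {L | WalkLen tail head ℓ H i j L}

/-- The `ℓ`-diameter of `H`: the maximum of `wdist` over pairs of vertices lying in
a common component of `H`. -/
noncomputable def wdiam (tail head : E → V) (ℓ : E → ℝ) (H : Set E) : ℝ :=
  sSup {x | ∃ i j : V, (∃ L, WalkLen tail head ℓ H i j L) ∧ x = wdist tail head ℓ H i j}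

/-- Maximum norm of `p` restricted to a vertex set `A`. -/
noncomputable def supNormOn (A : Set V) (p : V → ℝ) : ℝ := sSup {x | ∃ i ∈ A, x = |p i|}

/-- Maximum norm of an arc vector. -/
noncomputable def eSupNorm (x : E → ℝ) : ℝ := sSup {r | ∃ e : E, r = |x e|}

/-- `min { σ_e : σ_e > 0 }`. -/
noncomputable def minPos (σ : E → ℝ) : ℝ := sInf {x | ∃ e, 0 < σ e ∧ x = σ e}

/-- `min_e ℓ_e`. -/
noncomputable def minLen (ℓ : E → ℝ) : ℝ := sInf {x | ∃ e : E, x = ℓ e}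

/-- The cost `ℓᵀφ` of a flow. -/
def cost (ℓ φ : E → ℝ) : ℝ := ∑ e, ℓ e * φ e

/-- The transshipment problem is feasible: there is a positive flow. -/
def Feasible (tail head : E → V) (b : V → ℝ) : Prop :=
  ∃ φ : E → ℝ, IsFlow tail head b φ ∧ ∀ e, 0 ≤ φ e

/-- `φ` is a minimum-cost positive flow. -/
def IsOptimal (tail head : E → V) (ℓ : E → ℝ) (b : V → ℝ) (φ : E → ℝ) : Prop :=
  IsFlow tail head b φ ∧ (∀ e, 0 ≤ φ e) ∧
    ∀ ψ : E → ℝ, IsFlow tail head b ψ → (∀ e, 0 ≤ ψ e) → cost ℓ φ ≤ cost ℓ ψ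

/-- `Ĥ`: the set of arcs carried by some minimum-cost positive flow. -/
def optSupport (tail head : E → V) (ℓ : E → ℝ) (b : V → ℝ) : Set E :=
  {e | ∃ φ : E → ℝ, IsOptimal tail head ℓ b φ ∧ 0 < φ e}

/-- The current `φ(t) = σ(t)·Ψ(p(t))` of the Physarum solver. -/
noncomputable def current (tail head : E → V) (ℓ : E → ℝ) (σ : ℝ → E → ℝ)
    (p : ℝ → V → ℝ) (t : ℝ) : E → ℝ :=
  fun e => σ t e * field tail head ℓ (p t) e

/-- The Physarum dynamics: `σ(t) > 0` and continuously differentiable on `[0,∞)`,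
`L(σ(t)) p(t) = b`, and `σ' = φ - σ` where `φ(t) = σ(t)·Ψ(p(t))`. -/
structure PhysarumDynamics (tail head : E → V) (ℓ : E → ℝ) (b : V → ℝ)
    (σ : ℝ → E → ℝ) (p : ℝ → V → ℝ) : Prop where
  pos : ∀ t : ℝ, 0 ≤ t → ∀ e, 0 < σ t e
  kirchhoff : ∀ t : ℝ, 0 ≤ t → (lap tail head ℓ (σ t)).mulVec (p t) = b
  contp : ContinuousOn (fun t => p t) (Set.Ici (0 : ℝ))
  dyn : ∀ t ∈ Set.Ici (0 : ℝ), ∀ e : E,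
    HasDerivWithinAt (fun s => σ s e)
      (current tail head ℓ σ p t e - σ t e) (Set.Ici (0 : ℝ)) t

/-- A directed walk from `i` to `j` using the listed arcs in order. -/
inductive DiWalk (tail head : E → V) : V → V → List E → Prop
  | nil (i : V) : DiWalk tail head i i []
  | cons {j k : V} {es : List E} (i : V) (e : E) (h1 : tail e = i) (h2 : head e = j)
      (hw : DiWalk tail head j k es) : DiWalk tail head i k (e :: es)

/-- Discrete `∞`-harmonicity of `p` at node `i` with respect to the arc set `H`:
the maximal in-slope equals the maximal out-slope, and both are nonnegative. -/
noncomputable def InfHarmAt (tail head : E → V) (ℓ : E → ℝ) (H : Set E)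
    (p : V → ℝ) (i : V) : Prop :=
  sSup {r | ∃ e ∈ H, head e = i ∧ r = (p (tail e) - p i) / ℓ e}
    = sSup {r | ∃ e ∈ H, tail e = i ∧ r = (p i - p (head e)) / ℓ e}
  ∧ 0 ≤ sSup {r | ∃ e ∈ H, tail e = i ∧ r = (p i - p (head e)) / ℓ e}

end PhysarumSetup

/-!
Suppose instead that `ℓ(π) ≤ p̂_a - p̂_b`. Averaging minimum-cost flows gives one, `φ`, that is
positive on all of `Ĥ`. Let `x` be the unit `a`–`b` flow along `π` and `y` a unit `a`–`b` flow
supported on `Ĥ`; since `p̂` is tight on `Ĥ`, the cost of `y` is `p̂_a - p̂_b`. Then `x - y` is a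
circulation of cost `ℓ(π) - (p̂_a - p̂_b) ≤ 0` that decreases flow only on `Ĥ`, so
`φ + ε (x - y)` is again a minimum-cost flow for small `ε > 0`. It carries flow on an arc of `π`
outside `Ĥ`, contradicting the definition of `Ĥ`.
-/

open Matrix

section Cost

variable {E : Type*}

theorem count_cons_eq_single_add [DecidableEq E] (e : E) (es : List E) :
    (fun f => ((e :: es).count f : ℝ)) = Pi.single e 1 + fun f => (es.count f : ℝ) := by
  funext f
  by_cases hf : f = e <;> simp [hf, Ne.symm, add_comm]

variable [Fintype E]

theorem cost_eq_dotProduct (ℓ φ : E → ℝ) : cost ℓ φ = ℓ ⬝ᵥ φ := rfl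

theorem cost_count [DecidableEq E] (ℓ : E → ℝ) (es : List E) :
    cost ℓ (fun f => (es.count f : ℝ)) = (es.map ℓ).sum := by
  induction es with
  | nil => simp [cost]
  | cons e es ih =>
    rw [cost_eq_dotProduct, count_cons_eq_single_add, dotProduct_add, dotProduct_single,
      ← cost_eq_dotProduct, ih]
    simp

end Cost

section IncidenceMatrix

variable {V E : Type*} [DecidableEq V] {tail head : E → V}

theorem NoLoops.incMatrix_apply (h : NoLoops tail head) (i : V) (e : E) :
    incMatrix tail head i e = (if tail e = i then 1 else 0) - (if head e = i then 1 else 0) := by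
  by_cases ht : tail e = i <;> by_cases hh : head e = i <;> simp [incMatrix, ht, hh]
  exact h e (ht.trans hh.symm)

theorem NoLoops.vecMul_incMatrix [Fintype V] (h : NoLoops tail head) (p : V → ℝ) :
    p ᵥ* incMatrix tail head = fun e => p (tail e) - p (head e) := by
  funext e
  simp [vecMul, dotProduct, h.incMatrix_apply, mul_sub, Finset.sum_sub_distrib]

theorem NoLoops.cost_eq_dotProduct_incMatrix_mulVec [Fintype V] [Fintype E]
    (h : NoLoops tail head) {ℓ : E → ℝ} {p : V → ℝ} {H : Set E}
    (hp : ∀ e ∈ H, field tail head ℓ p e = 1) {y : E → ℝ} (hy : Function.support y ⊆ H) :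
    cost ℓ y = p ⬝ᵥ (incMatrix tail head *ᵥ y) := by
  rw [dotProduct_mulVec, h.vecMul_incMatrix, cost_eq_dotProduct]
  refine Finset.sum_congr rfl fun e _ => ?_
  by_cases hye : y e = 0
  · simp [hye]
  · dsimp only
    rw [eq_of_div_eq_one (hp e (hy hye))]

variable [Fintype E] [DecidableEq E]

theorem NoLoops.incMatrix_mulVec_single (h : NoLoops tail head) (e : E) :
    incMatrix tail head *ᵥ Pi.single e 1 = Pi.single (tail e) 1 - Pi.single (head e) 1 := by
  rw [mulVec_single_one]
  funext i
  simp [h.incMatrix_apply, Pi.single_apply, eq_comm]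

theorem DiWalk.incMatrix_mulVec_count (h : NoLoops tail head) {u v : V} {es : List E}
    (hw : DiWalk tail head u v es) :
    incMatrix tail head *ᵥ (fun f => (es.count f : ℝ)) = Pi.single u 1 - Pi.single v 1 := by
  induction hw with
  | nil i =>
    funext j
    simp [mulVec, dotProduct]
  | cons i e ht hh _ ih =>
    rw [count_cons_eq_single_add, mulVec_add, h.incMatrix_mulVec_single, ih, ht, hh]
    abel

theorem UReach.exists_incMatrix_mulVec_eq (h : NoLoops tail head) {H : Set E} {u v : V}
    (hr : UReach tail head H u v) :
    ∃ y : E → ℝ, Function.support y ⊆ H ∧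
      incMatrix tail head *ᵥ y = Pi.single u 1 - Pi.single v 1 := by
  induction hr with
  | refl => exact ⟨0, by simp, by simp⟩
  | tail _ hstep ih =>
    obtain ⟨y, hyH, hy⟩ := ih
    obtain ⟨e, heH, ⟨ht, hh⟩ | ⟨ht, hh⟩⟩ := hstep
    · refine ⟨y + Pi.single e 1, ?_, ?_⟩
      · exact (Function.support_add _ _).trans
          (Set.union_subset hyH (Pi.support_single_subset.trans (by simpa using heH)))
      · rw [mulVec_add, hy, h.incMatrix_mulVec_single, ht, hh]
        abel
    · refine ⟨y - Pi.single e 1, ?_, ?_⟩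
      · exact (Function.support_sub _ _).trans
          (Set.union_subset hyH (Pi.support_single_subset.trans (by simpa using heH)))
      · rw [mulVec_sub, hy, h.incMatrix_mulVec_single, ht, hh]
        abel

end IncidenceMatrix

open Filter Topology in
theorem exists_pos_forall_nonneg_add_mul {ι : Type*} [Finite ι] {φ d : ι → ℝ}
    (hφ : ∀ i, 0 ≤ φ i) (hd : ∀ i, d i < 0 → 0 < φ i) :
    ∃ ε > 0, ∀ i, 0 ≤ φ i + ε * d i := by
  have hsmall : ∀ᶠ ε in 𝓝[>] (0 : ℝ), 0 < ε ∧ ∀ i, 0 ≤ φ i + ε * d i := by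
    refine eventually_mem_nhdsWithin.and (eventually_all.2 fun i => ?_)
    by_cases hdi : d i < 0
    · have hlim : Tendsto (fun ε => φ i + ε * d i) (𝓝 0) (𝓝 (φ i)) := by
        simpa using (tendsto_const_nhds (x := φ i)).add ((tendsto_id (x := 𝓝 (0 : ℝ))).mul_const (d i))
      exact nhdsWithin_le_nhds ((hlim.eventually (lt_mem_nhds (hd i hdi))).mono fun _ => le_of_lt)
    · filter_upwards [eventually_mem_nhdsWithin] with ε hε
      have : 0 ≤ ε * d i := mul_nonneg (le_of_lt hε) (not_lt.1 hdi)
      linarith [hφ i]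
  exact hsmall.exists

section OptimalFlows

variable {V E : Type*} [Fintype E] [DecidableEq V] {tail head : E → V} {ℓ : E → ℝ} {b : V → ℝ}

theorem convex_setOf_isOptimal : Convex ℝ {φ | IsOptimal tail head ℓ b φ} := by
  rintro φ ⟨hφb, hφ0, hφmin⟩ ψ ⟨hψb, hψ0, hψmin⟩ s t hs ht hst
  refine ⟨?_, fun e => ?_, fun χ hχb hχ0 => ?_⟩
  · rw [IsFlow, mulVec_add, mulVec_smul, mulVec_smul, hφb, hψb, ← add_smul, hst, one_smul]
  · simpa using add_nonneg (mul_nonneg hs (hφ0 e)) (mul_nonneg ht (hψ0 e))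
  · calc cost ℓ (s • φ + t • ψ) = s * cost ℓ φ + t * cost ℓ ψ := by
          simp only [cost_eq_dotProduct, dotProduct_add, dotProduct_smul, smul_eq_mul]
      _ ≤ s * cost ℓ χ + t * cost ℓ χ := by
          gcongr
          exacts [hφmin χ hχb hχ0, hψmin χ hχb hχ0]
      _ = cost ℓ χ := by rw [← add_mul, hst, one_mul]

theorem IsOptimal.exists_isOptimal_pos_of_subset {φ₀ : E → ℝ} (hφ₀ : IsOptimal tail head ℓ b φ₀)
    (S : Finset E) (hS : ∀ e ∈ S, e ∈ optSupport tail head ℓ b) :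
    ∃ φ, IsOptimal tail head ℓ b φ ∧ ∀ e ∈ S, 0 < φ e := by
  classical
  induction S using Finset.induction_on with
  | empty => exact ⟨φ₀, hφ₀, by simp⟩
  | insert e S _ ih =>
    obtain ⟨φ, hφ, hφpos⟩ := ih fun f hf => hS f (Finset.mem_insert_of_mem hf)
    obtain ⟨ψ, hψ, hψe⟩ := hS e (Finset.mem_insert_self e S)
    refine ⟨(1 / 2 : ℝ) • φ + (1 / 2 : ℝ) • ψ,
      convex_setOf_isOptimal hφ hψ (by norm_num) (by norm_num) (by norm_num), ?_⟩
    simp only [Finset.forall_mem_insert, Pi.add_apply, Pi.smul_apply, smul_eq_mul]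
    exact ⟨by linarith [hφ.2.1 e], fun f hf => by linarith [hφpos f hf, hψ.2.1 f]⟩

theorem IsOptimal.exists_isOptimal_pos_on_optSupport {φ₀ : E → ℝ}
    (hφ₀ : IsOptimal tail head ℓ b φ₀) :
    ∃ φ, IsOptimal tail head ℓ b φ ∧ ∀ e ∈ optSupport tail head ℓ b, 0 < φ e := by
  classical
  obtain ⟨φ, hφ, hpos⟩ :=
    hφ₀.exists_isOptimal_pos_of_subset (Finset.univ.filter (· ∈ optSupport tail head ℓ b))
      fun e he => (Finset.mem_filter.1 he).2
  exact ⟨φ, hφ, fun e he => hpos e (Finset.mem_filter.2 ⟨Finset.mem_univ e, he⟩)⟩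

theorem IsOptimal.mem_optSupport_of_circulation {φ d : E → ℝ} (hφ : IsOptimal tail head ℓ b φ)
    (hd : incMatrix tail head *ᵥ d = 0) (hneg : ∀ f, d f < 0 → 0 < φ f)
    (hcost : cost ℓ d ≤ 0) {e : E} (he : 0 < d e) : e ∈ optSupport tail head ℓ b := by
  obtain ⟨hφb, hφ0, hφmin⟩ := hφ
  obtain ⟨ε, hε, hnonneg⟩ := exists_pos_forall_nonneg_add_mul hφ0 hneg
  refine ⟨φ + ε • d, ⟨?_, fun f => by simpa using hnonneg f, fun χ hχb hχ0 => ?_⟩, ?_⟩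
  · rw [IsFlow, mulVec_add, mulVec_smul, hd, smul_zero, add_zero, hφb]
  · calc cost ℓ (φ + ε • d) = cost ℓ φ + ε * cost ℓ d := by
          simp only [cost_eq_dotProduct, dotProduct_add, dotProduct_smul, smul_eq_mul]
      _ ≤ cost ℓ φ := by nlinarith
      _ ≤ cost ℓ χ := hφmin χ hχb hχ0
  · simpa using add_pos_of_nonneg_of_pos (hφ0 e) (mul_pos hε he)

end OptimalFlows

theorem statement_17_general {V E : Type*} [Fintype V] [Fintype E] [DecidableEq V] [DecidableEq E]
    (tail head : E → V)
    (hloops : NoLoops tail head)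
    (ℓ : E → ℝ) (hℓ : ∀ e, 0 < ℓ e)
    (b : V → ℝ)
    (phat : V → ℝ)
    (hphat : ∀ e ∈ optSupport tail head ℓ b, field tail head ℓ phat e = 1)
    (u v : V) (es : List E) (hwalk : DiWalk tail head u v es)
    (hu : u ∈ VSet tail head (optSupport tail head ℓ b))
    (hcomp : UReach tail head (optSupport tail head ℓ b) u v)
    (hnotin : ∃ e ∈ es, e ∉ optSupport tail head ℓ b) :
    (phat u - phat v) / (es.map ℓ).sum < 1 := by
  obtain ⟨e₀, he₀, he₀H⟩ := hnotin
  have hlen : 0 < (es.map ℓ).sum :=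
    List.sum_pos _ (by simpa using fun e _ => hℓ e) (by simpa using List.ne_nil_of_mem he₀)
  rw [div_lt_one hlen]
  by_contra! hle
  obtain ⟨-, ⟨φ₀, hφ₀, -⟩, -⟩ := hu
  obtain ⟨φ, hφ, hφpos⟩ := hφ₀.exists_isOptimal_pos_on_optSupport
  obtain ⟨y, hyH, hy⟩ := hcomp.exists_incMatrix_mulVec_eq hloops
  set x : E → ℝ := fun f => (es.count f : ℝ)
  have hx0 : ∀ f, 0 ≤ x f := fun f => Nat.cast_nonneg _
  refine he₀H (hφ.mem_optSupport_of_circulation (d := x - y) ?_ ?_ ?_ ?_)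
  · rw [mulVec_sub, hwalk.incMatrix_mulVec_count hloops, hy, sub_self]
  · intro f hf
    refine hφpos f (hyH fun hyf => ?_)
    simp only [Pi.sub_apply, hyf, sub_zero] at hf
    linarith [hx0 f]
  · rw [cost_eq_dotProduct, dotProduct_sub, ← cost_eq_dotProduct, ← cost_eq_dotProduct,
      cost_count, hloops.cost_eq_dotProduct_incMatrix_mulVec hphat hyH, hy, dotProduct_sub,
      dotProduct_single, dotProduct_single]
    linarith
  · have hye₀ : y e₀ = 0 := by_contra fun h => he₀H (hyH h)
    simpa [x, hye₀] using List.count_pos_iff.2 he₀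

theorem statement_17 {V E : Type*} [Fintype V] [Fintype E] [DecidableEq V] [DecidableEq E]
    (tail head : E → V)
    (hloops : NoLoops tail head) (hmult : NoMultiple tail head)
    (hconn : IsConnectedGraph tail head)
    (ℓ : E → ℝ) (hℓ : ∀ e, 0 < ℓ e)
    (b : V → ℝ) (hb : ∑ i, b i = 0)
    (hfeas : Feasible tail head b)
    (phat : V → ℝ)
    (hphat : ∀ e ∈ optSupport tail head ℓ b, field tail head ℓ phat e = 1)
    (u v : V) (es : List E) (hwalk : DiWalk tail head u v es)
    (hu : u ∈ VSet tail head (optSupport tail head ℓ b))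
    (hv : v ∈ VSet tail head (optSupport tail head ℓ b))
    (hcomp : UReach tail head (optSupport tail head ℓ b) u v)
    (hint : ∀ e ∈ es.dropLast, head e ∉ VSet tail head (optSupport tail head ℓ b))
    (hnodup : (u :: es.map head).Nodup)
    (hnotin : ∃ e ∈ es, e ∉ optSupport tail head ℓ b) :
    (phat u - phat v) / (es.map ℓ).sum < 1 :=
  statement_17_general tail head hloops ℓ hℓ b phat hphat u v es hwalk hu hcomp hnotin
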